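/- All even cosine Fourier coefficients of M are nonpositive: for every integer k ≥ 1, ∫_{-2}^{2} cos(πkx) M(x) dx ≤ 0. -/

import Mathlib

/-!
`M` is the cross-correlation of `f` and `g`, so its cosine coefficient at frequency `c` is
`C_f C_g + S_f S_g`, where `C_h = ∫ cos (c t) h t` and `S_h = ∫ sin (c t) h t`. At `c = π k` the
indicator of `[-1, 1]` has vanishing cosine and sine coefficients, so `g = 1_[-1,1] - f` gives
`C_g = -C_f` and `S_g = -S_f`, and the coefficient equals `-(C_f ^ 2 + S_f ^ 2) ≤ 0`.
-/

open Real MeasureTheory Set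

noncomputable def crossCorrelation (f g : ℝ → ℝ) (x : ℝ) : ℝ := ∫ t, f t * g (x + t)

lemma integrable_of_bounded_of_forall_notMem {α : Type*} [MeasurableSpace α] {μ : Measure α}
    {f : α → ℝ} {s : Set α} {C : ℝ} (hs : MeasurableSet s) (hμs : μ s ≠ ⊤)
    (hf : AEStronglyMeasurable f μ) (hC : ∀ x ∈ s, |f x| ≤ C) (h0 : ∀ x ∉ s, f x = 0) :
    Integrable f μ :=
  (Measure.integrableOn_of_bounded hμs hf
    (ae_restrict_of_forall_mem hs hC)).integrable_of_forall_notMem_eq_zero h0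

lemma intervalIntegral_eq_integral_of_forall_notMem_Icc {f : ℝ → ℝ} {a b : ℝ} (hab : a ≤ b)
    (hf : ∀ x ∉ Icc a b, f x = 0) : ∫ x in a..b, f x = ∫ x, f x := by
  rw [intervalIntegral.integral_of_le hab, ← integral_Icc_eq_integral_Ioc,
    setIntegral_eq_integral_of_forall_compl_eq_zero hf]

lemma MeasureTheory.Integrable.cos_mul {g : ℝ → ℝ} (hg : Integrable g) (c : ℝ) :
    Integrable fun s => cos (c * s) * g s :=
  hg.bdd_mul (by fun_prop) (.of_forall fun _ => abs_cos_le_one _)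

lemma MeasureTheory.Integrable.sin_mul {g : ℝ → ℝ} (hg : Integrable g) (c : ℝ) :
    Integrable fun s => sin (c * s) * g s :=
  hg.bdd_mul (by fun_prop) (.of_forall fun _ => abs_sin_le_one _)

lemma integral_cos_mul_comp_add {g : ℝ → ℝ} (hg : Integrable g) (c t : ℝ) :
    ∫ x, cos (c * x) * g (x + t) =
      cos (c * t) * (∫ s, cos (c * s) * g s) + sin (c * t) * ∫ s, sin (c * s) * g s := by
  have hshift := integral_add_right_eq_self (μ := volume) (fun s => cos (c * (s - t)) * g s) t
  simp only [add_sub_cancel_right] at hshift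
  rw [hshift, ← integral_const_mul (cos (c * t)), ← integral_const_mul,
    ← integral_add ((hg.cos_mul c).const_mul _) ((hg.sin_mul c).const_mul _)]
  congr 1 with s
  rw [mul_sub, cos_sub]
  ring

lemma integrable_cos_mul_crossCorrelation_integrand {f g : ℝ → ℝ} (hf : Integrable f)
    (hg : Integrable g) (c : ℝ) :
    Integrable (fun p : ℝ × ℝ => cos (c * p.1) * (f p.2 * g (p.1 + p.2))) (volume.prod volume) := by
  have hshear : Integrable (fun p : ℝ × ℝ => g (p.1 + p.2) * f p.2) (volume.prod volume) :=
    (measurePreserving_add_prod volume volume).integrable_comp_of_integrable (hg.mul_prod hf)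
  simp_rw [mul_comm (f _)]
  exact hshear.bdd_mul (by fun_prop) (.of_forall fun _ => abs_cos_le_one _)

theorem integral_cos_mul_crossCorrelation {f g : ℝ → ℝ} (hf : Integrable f) (hg : Integrable g)
    (c : ℝ) :
    ∫ x, cos (c * x) * crossCorrelation f g x =
      (∫ t, cos (c * t) * f t) * (∫ t, cos (c * t) * g t) +
        (∫ t, sin (c * t) * f t) * (∫ t, sin (c * t) * g t) := by
  simp_rw [crossCorrelation, ← integral_const_mul]
  rw [integral_integral_swap (integrable_cos_mul_crossCorrelation_integrand hf hg c)]
  simp_rw [mul_left_comm _ (f _), integral_const_mul, integral_cos_mul_comp_add hg]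
  rw [← integral_mul_const, ← integral_mul_const,
    ← integral_add ((hf.cos_mul c).mul_const _) ((hf.sin_mul c).mul_const _)]
  congr 1 with t
  ring

lemma crossCorrelation_eq_zero_of_notMem_Icc {f g : ℝ → ℝ} {a b x : ℝ}
    (hf : ∀ t ∉ Icc (-a) a, f t = 0) (hg : ∀ t ∉ Icc (-b) b, g t = 0)
    (hx : x ∉ Icc (-(a + b)) (a + b)) : crossCorrelation f g x = 0 := by
  refine integral_eq_zero_of_ae (.of_forall fun t => ?_)
  by_cases ht : t ∈ Icc (-a) a
  · have hxt : x + t ∉ Icc (-b) b := by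
      simp only [mem_Icc, not_and_or, not_le] at hx ht ⊢
      rcases hx with hx | hx
      · exact .inl (by linarith)
      · exact .inr (by linarith)
    simp [hg _ hxt]
  · simp [hf t ht]

lemma integral_mul_eq_setIntegral_sub {f g φ : ℝ → ℝ} {s : Set ℝ} (hs : MeasurableSet s)
    (hφ : IntegrableOn φ s) (hφf : Integrable fun t => φ t * f t) (hf : ∀ t ∉ s, f t = 0)
    (hg_on : ∀ t ∈ s, g t = 1 - f t) (hg_off : ∀ t ∉ s, g t = 0) :
    ∫ t, φ t * g t = (∫ t in s, φ t) - ∫ t, φ t * f t := by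
  have hφg : ∀ t ∈ s, φ t * g t = φ t - φ t * f t := fun t ht => by
    rw [hg_on t ht]; ring
  rw [← setIntegral_eq_integral_of_forall_compl_eq_zero fun t ht => by rw [hg_off t ht, mul_zero],
    setIntegral_congr_fun hs hφg, integral_sub hφ hφf.integrableOn,
    setIntegral_eq_integral_of_forall_compl_eq_zero (f := fun t => φ t * f t)
      fun t ht => by rw [hf t ht, mul_zero]]

lemma integral_cos_nat_mul_pi_mul_Icc {k : ℕ} (hk : k ≠ 0) :
    ∫ t in Icc (-1 : ℝ) 1, cos (π * k * t) = 0 := by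
  rw [integral_Icc_eq_integral_Ioc, ← intervalIntegral.integral_of_le (by norm_num),
    intervalIntegral.integral_comp_mul_left cos (by positivity), integral_cos, mul_comm π]
  simp [sin_nat_mul_pi]

lemma integral_sin_mul_Icc_neg (a c : ℝ) : ∫ t in Icc (-a) a, sin (c * t) = 0 := by
  rcases lt_or_ge a (-a) with ha | ha
  · simp [Icc_eq_empty_of_lt ha]
  rcases eq_or_ne c 0 with rfl | hc
  · simp
  rw [integral_Icc_eq_integral_Ioc, ← intervalIntegral.integral_of_le ha,
    intervalIntegral.integral_comp_mul_left sin hc, integral_sin, mul_neg, cos_neg, sub_self,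
    smul_zero]

theorem even_cosine_coeffs_nonpos_general (f g M : ℝ → ℝ)
    (hf_meas : Measurable f)
    (hf01 : ∀ x ∈ Icc (-1:ℝ) 1, 0 ≤ f x ∧ f x ≤ 1)
    (hf_supp : ∀ x, x ∉ Icc (-1:ℝ) 1 → f x = 0)
    (hg : ∀ x, g x = if x ∈ Icc (-1:ℝ) 1 then 1 - f x else 0)
    (hM : ∀ x, M x = ∫ t in (-1:ℝ)..1, f t * g (x + t)) :
    ∀ k : ℕ, 1 ≤ k → ∫ x in (-2:ℝ)..2, Real.cos (π * k * x) * M x ≤ 0 := by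
  intro k hk
  have hg_on : ∀ x ∈ Icc (-1:ℝ) 1, g x = 1 - f x := fun x hx => by rw [hg, if_pos hx]
  have hg_off : ∀ x ∉ Icc (-1:ℝ) 1, g x = 0 := fun x hx => by rw [hg, if_neg hx]
  have hf_int : Integrable f :=
    integrable_of_bounded_of_forall_notMem measurableSet_Icc measure_Icc_lt_top.ne
      hf_meas.aestronglyMeasurable (fun x hx => abs_le.2 ⟨by linarith [hf01 x hx], (hf01 x hx).2⟩)
      hf_supp
  have hg_int : Integrable g :=
    ((continuous_const.integrableOn_Icc.sub hf_int.integrableOn).congr_fun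
      (fun x hx => (hg_on x hx).symm) measurableSet_Icc).integrable_of_forall_notMem_eq_zero hg_off
  have hM_eq : M = crossCorrelation f g := funext fun x =>
    (hM x).trans (intervalIntegral_eq_integral_of_forall_notMem_Icc (by norm_num)
      fun t ht => by rw [hf_supp t ht, zero_mul])
  have hM_supp : ∀ x ∉ Icc (-2:ℝ) 2, M x = 0 := fun x hx => by
    rw [hM_eq]
    exact crossCorrelation_eq_zero_of_notMem_Icc hf_supp hg_off (by norm_num [hx])
  have hcos_g : ∫ t, cos (π * k * t) * g t = -∫ t, cos (π * k * t) * f t := by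
    rw [integral_mul_eq_setIntegral_sub measurableSet_Icc
      (by fun_prop : Continuous _).integrableOn_Icc
      (hf_int.cos_mul _) hf_supp hg_on hg_off, integral_cos_nat_mul_pi_mul_Icc (by omega),
      zero_sub]
  have hsin_g : ∫ t, sin (π * k * t) * g t = -∫ t, sin (π * k * t) * f t := by
    rw [integral_mul_eq_setIntegral_sub measurableSet_Icc
      (by fun_prop : Continuous _).integrableOn_Icc
      (hf_int.sin_mul _) hf_supp hg_on hg_off, integral_sin_mul_Icc_neg, zero_sub]
  rw [intervalIntegral_eq_integral_of_forall_notMem_Icc (by norm_num)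
      fun x hx => by rw [hM_supp x hx, mul_zero],
    hM_eq, integral_cos_mul_crossCorrelation hf_int hg_int, hcos_g, hsin_g]
  nlinarith [sq_nonneg (∫ t, cos (π * k * t) * f t), sq_nonneg (∫ t, sin (π * k * t) * f t)]

theorem even_cosine_coeffs_nonpos (f g M : ℝ → ℝ)
    (hf_meas : Measurable f)
    (hf01 : ∀ x ∈ Icc (-1:ℝ) 1, 0 ≤ f x ∧ f x ≤ 1)
    (hf_supp : ∀ x, x ∉ Icc (-1:ℝ) 1 → f x = 0)
    (hf_int : ∫ x in (-1:ℝ)..1, f x = 1)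
    (hg : ∀ x, g x = if x ∈ Icc (-1:ℝ) 1 then 1 - f x else 0)
    (hM : ∀ x, M x = ∫ t in (-1:ℝ)..1, f t * g (x + t)) :
    ∀ k : ℕ, 1 ≤ k → ∫ x in (-2:ℝ)..2, Real.cos (π * k * x) * M x ≤ 0 :=
  even_cosine_coeffs_nonpos_general f g M hf_meas hf01 hf_supp hg hM
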